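/- arXiv:1912.12421 — 2 statements merged into one kernel-verified Lean document; each statement's English description precedes it below -/
import Mathlib

section
/- Exact penalty for concave penalties over polytopes: let D ⊆ ℝ^n be a compact convex polytope, f : ℝ^n → ℝ continuous, and P : ℝ^n → ℝ a nonnegative concave continuous function vanishing exactly on a set S ⊆ D containing all vertices of D on which P vanishes, with S = D ∩ {x : P(x)=0} nonempty. Suppose f is concave (or linear). Then there exists ρ₀ ≥ 0 such that for every ρ > ρ₀, the minimum of f(x) + ρ·P(x) over D is attained at a point of S, and min_{x∈S} f(x) = min_{x∈D} (f(x) + ρ·P(x)). -/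
/-- exact penalty for concave penalties over polytopes. If `D` is a compact
convex polytope, `f` is concave continuous on `D`, `P` is nonnegative concave continuous
on `D`, and `S = {x ∈ D | P x = 0}` is nonempty, then there exists `ρ₀ ≥ 0` such that for
all `ρ > ρ₀` the penalized problem `min_{D} f + ρ P` attains its minimum on `S`, and
`min_S f = min_D (f + ρ P)`. -/
theorem stmt7 {n : ℕ} (F : Finset (Fin n → ℝ)) (hF : F.Nonempty)
    (f P : (Fin n → ℝ) → ℝ)
    (D : Set (Fin n → ℝ)) (hD : D = convexHull ℝ (F : Set (Fin n → ℝ)))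
    (hfcont : ContinuousOn f D) (hfconc : ConcaveOn ℝ D f)
    (hPcont : ContinuousOn P D) (hPconc : ConcaveOn ℝ D P)
    (hPnn : ∀ x ∈ D, 0 ≤ P x)
    (S : Set (Fin n → ℝ)) (hS : S = {x ∈ D | P x = 0}) (hSne : S.Nonempty) :
    ∃ ρ₀ : ℝ, 0 ≤ ρ₀ ∧ ∀ ρ : ℝ, ρ₀ < ρ →
      (∃ x ∈ S, ∀ z ∈ D, f x + ρ * P x ≤ f z + ρ * P z) ∧
      sInf (f '' S) = sInf ((fun z => f z + ρ * P z) '' D) := by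
  obtain ⟨x₀, hx₀S⟩ := hSne
  have hx₀D : x₀ ∈ D := (hS ▸ hx₀S).1
  have hPx₀ : P x₀ = 0 := (hS ▸ hx₀S).2
  have hFD : (F : Set (Fin n → ℝ)) ⊆ D := hD ▸ subset_convexHull ℝ _
  refine ⟨max 0 (F.sup' hF (fun v => if P v = 0 then 0 else (f x₀ - f v) / P v)),
    le_max_left _ _, fun ρ hρ => ?_⟩
  have hρ0 : 0 ≤ ρ := le_of_lt (lt_of_le_of_lt (le_max_left _ _) hρ)
  set g : (Fin n → ℝ) → ℝ := fun z => f z + ρ * P z with hg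
  have hgconc : ConcaveOn ℝ D g := hfconc.add (hPconc.smul hρ0)
  -- minimizer of g over vertices
  obtain ⟨v, hvF, hvmin⟩ := F.exists_min_image g hF
  -- g v ≤ g z for all z ∈ D
  have hgvle : ∀ z ∈ D, g v ≤ g z := by
    intro z hz
    obtain ⟨w, hwF, hwle⟩ := hgconc.exists_le_of_mem_convexHull hFD (hD ▸ hz)
    exact le_trans (hvmin w hwF) hwle
  -- P v = 0
  have hPv : P v = 0 := by
    by_contra hne
    have hPvpos : 0 < P v := lt_of_le_of_ne (hPnn v (hFD hvF)) (Ne.symm hne)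
    have h1 : (f x₀ - f v) / P v < ρ := by
      refine lt_of_le_of_lt ?_ hρ
      refine le_trans ?_ (le_max_right _ _)
      have := F.le_sup' (fun v => if P v = 0 then 0 else (f x₀ - f v) / P v) hvF
      simp only [hne, if_false] at this
      exact this
    have h2 : f x₀ - f v < ρ * P v := (div_lt_iff₀ hPvpos).mp h1
    have h3 : f x₀ < g v := by simp only [hg]; linarith
    have h4 : g v ≤ f x₀ := by
      have := hgvle x₀ hx₀D
      simpa [hg, hPx₀] using this
    linarith
  have hvS : v ∈ S := hS ▸ ⟨hFD hvF, hPv⟩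
  have hgv : g v = f v := by simp [hg, hPv]
  refine ⟨⟨v, hvS, fun z hz => hgvle z hz⟩, ?_⟩
  have h1 : IsLeast (f '' S) (f v) := by
    refine ⟨⟨v, hvS, rfl⟩, ?_⟩
    rintro _ ⟨x, hxS, rfl⟩
    have hxD : x ∈ D := (hS ▸ hxS).1
    have hPx : P x = 0 := (hS ▸ hxS).2
    have := hgvle x hxD
    rw [hgv] at this
    simpa [hg, hPx] using this
  have h2 : IsLeast ((fun z => f z + ρ * P z) '' D) (f v) := by
    refine ⟨⟨v, hFD hvF, by simp [hPv]⟩, ?_⟩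
    rintro _ ⟨z, hzD, rfl⟩
    have := hgvle z hzD
    rwa [hgv] at this
  rw [h1.csInf_eq, h2.csInf_eq]
end

section
/- The function L ↦ L·(2^{R/(L·B)} − 1) is strictly decreasing in L on (0, ∞) for R > 0, and converges to R·ln 2 / B as L → ∞. -/
open Real Filter

lemma key_slope {u v : ℝ} (hu : 0 < u) (huv : u < v) :
    (Real.exp u - 1) / u < (Real.exp v - 1) / v := by
  have := strictConvexOn_exp.secant_strict_mono (a := 0) (x := u) (y := v)
    (Set.mem_univ _) (Set.mem_univ _) (Set.mem_univ _) hu.ne' (hu.trans huv).ne' huv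
  simpa [Real.exp_zero] using this

/-- `L ↦ L * (2 ^ (R / (L * B)) - 1)` is strictly decreasing on `(0, ∞)`
for `R > 0`, and tends to `R * ln 2 / B` as `L → ∞`. -/
theorem stmt12 (B R : ℝ) (hB : 0 < B) (hR : 0 < R) :
    StrictAntiOn (fun L : ℝ => L * ((2 : ℝ) ^ (R / (L * B)) - 1)) (Set.Ioi 0) ∧
    Filter.Tendsto (fun L : ℝ => L * ((2 : ℝ) ^ (R / (L * B)) - 1)) Filter.atTop
      (nhds (R * Real.log 2 / B)) := by
  set c : ℝ := R * Real.log 2 / B with hc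
  have hlog2 : 0 < Real.log 2 := Real.log_pos (by norm_num)
  have hcpos : 0 < c := by positivity
  have hrw : ∀ L : ℝ, L ≠ 0 → (2 : ℝ) ^ (R / (L * B)) = Real.exp (c / L) := by
    intro L hL
    rw [Real.rpow_def_of_pos (by norm_num : (0:ℝ) < 2)]
    congr 1
    field_simp [hc]
    rw [hc]
    field_simp
  constructor
  · intro a ha b hb hab
    have ha' : (0:ℝ) < a := ha
    have hb' : (0:ℝ) < b := hb
    simp only
    rw [hrw a ha'.ne', hrw b hb'.ne']
    have hu : 0 < c / b := by positivity
    have huv : c / b < c / a := by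
      apply div_lt_div_of_pos_left hcpos ha' hab
    have key := key_slope hu huv
    have h1 : (Real.exp (c / b) - 1) / (c / b) = b * (Real.exp (c / b) - 1) / c := by
      field_simp
    have h2 : (Real.exp (c / a) - 1) / (c / a) = a * (Real.exp (c / a) - 1) / c := by
      field_simp
    rw [h1, h2] at key
    have := (div_lt_div_iff_of_pos_right hcpos).mp key
    linarith
  · have hderiv : HasDerivAt Real.exp 1 0 := by simpa using Real.hasDerivAt_exp 0
    have hslope : Tendsto (fun x : ℝ => (Real.exp x - 1) / x) (nhdsWithin 0 {0}ᶜ) (nhds 1) := by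
      have := hasDerivAt_iff_tendsto_slope.mp hderiv
      refine this.congr ?_
      intro x
      simp [slope, Real.exp_zero, inv_mul_eq_div]
    have hcl : Tendsto (fun L : ℝ => c / L) atTop (nhdsWithin 0 {0}ᶜ) := by
      rw [tendsto_nhdsWithin_iff]
      refine ⟨by simpa [div_eq_mul_inv] using tendsto_inv_atTop_zero.const_mul c, ?_⟩
      filter_upwards [eventually_gt_atTop 0] with L hL
      have : 0 < c / L := by positivity
      exact this.ne'
    have hmain : Tendsto (fun L : ℝ => c * ((Real.exp (c / L) - 1) / (c / L))) atTop (nhds c) := by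
      have := (hslope.comp hcl).const_mul c
      simpa using this
    refine Tendsto.congr' ?_ hmain
    filter_upwards [eventually_gt_atTop 0] with L hL
    rw [hrw L hL.ne']
    have hcL : c / L ≠ 0 := by positivity
    field_simp
end
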